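/- (Aliased WDD, noiseless) Let x, m ∈ ℂ^d, let K and L divide d, and let Y_{K,L} ∈ ℝ^{K×L} have entries (Y_{K,L})_{k,ℓ} = |Σ_{n=0}^{d-1} x_n m_{(n - ℓ d/L) mod d} e^{-2πin(kd/K)/d}|^2. Then for every α ∈ [L]_0 and ω ∈ [K]_0, (F_L Y_{K,L}^T F_K^T)_{α,ω} = (KL/d) Σ_{r=0}^{d/K-1} Σ_{ℓ=0}^{d/L-1} (F_d(x ∘ S_{ω-rK} conj(x)))_{α-ℓL} · (F_d(m ∘ S_{ω-rK} conj(m)))_{ℓL-α}, with all vector indices taken mod d. -/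

import Mathlib

open Complex BigOperators Finset

/-- Discrete Fourier transform on `ℂ^d` (indexed by `ZMod d`). -/
noncomputable def dftV (d : ℕ) [NeZero d] (x : ZMod d → ℂ) : ZMod d → ℂ :=
  fun k => ∑ n : ZMod d, x n *
    Complex.exp (-2 * Real.pi * Complex.I * (n.val : ℂ) * (k.val : ℂ) / (d : ℂ))

/-- Circular shift: `(S_ℓ x)_n = x_{n+ℓ}`. -/
def shiftV {d : ℕ} (ℓ : ZMod d) (x : ZMod d → ℂ) : ZMod d → ℂ := fun n => x (n + ℓ)

/-- Reversal: `(R x)_n = x_{-n}`. -/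
def revV {d : ℕ} (x : ZMod d → ℂ) : ZMod d → ℂ := fun n => x (-n)

/-- Componentwise complex conjugation. -/
def conjV {d : ℕ} (x : ZMod d → ℂ) : ZMod d → ℂ := fun n => (starRingEnd ℂ) (x n)

/-- Hadamard (componentwise) product. -/
def hadV {d : ℕ} (x y : ZMod d → ℂ) : ZMod d → ℂ := fun n => x n * y n

/-- Circular convolution. -/
noncomputable def convV (d : ℕ) [NeZero d] (x y : ZMod d → ℂ) : ZMod d → ℂ :=
  fun ℓ => ∑ n : ZMod d, x n * y (ℓ - n)

/-- Modulation: `(W_ℓ x)_n = x_n e^{2πiℓn/d}`. -/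
noncomputable def modV {d : ℕ} (ℓ : ZMod d) (x : ZMod d → ℂ) : ZMod d → ℂ :=
  fun n => x n * Complex.exp (2 * Real.pi * Complex.I * (ℓ.val : ℂ) * (n.val : ℂ) / (d : ℂ))

/-- The `N × N` DFT matrix. -/
noncomputable def dftMat (N : ℕ) : Matrix (ZMod N) (ZMod N) ℂ :=
  fun j k => Complex.exp (-2 * Real.pi * Complex.I * (j.val : ℂ) * (k.val : ℂ) / (N : ℂ))

/-!
Write `e_N j = exp (2πi j / N)` for the standard additive character of `ZMod N`; every phase in the
statement is a value of such a character, and restricting `e_d` to multiples of `d / M` gives `e_M`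
of the reduction mod `M`. Expanding `|·|²` and summing over `k` by orthogonality of the characters
of `ZMod K` keeps only the pairs `n' ≡ n + ω (mod K)`, i.e. `n' = n + ω - rK`. Symmetrically, on the
right-hand side the sum over `ℓ` of `e_{d/L}` keeps only `p ≡ n (mod d/L)`, i.e. `p = n - j d/L`.
Both sides thereby become `K Σ_r Σ_j e_L(-αj) Σ_n (x ∘ S_s x̄)_n (m ∘ S_s m̄)_{n - j d/L}` with
`s = ω - rK`.
-/
open ZMod (stdAddChar castHom)

theorem cexp_neg_two_pi_I_mul_mul_div {N : ℕ} [NeZero N] (a b : ℕ) :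
    Complex.exp (-2 * Real.pi * Complex.I * (a : ℂ) * (b : ℂ) / (N : ℂ)) =
      stdAddChar (-((a : ZMod N) * (b : ZMod N))) := by
  rw [show -((a : ZMod N) * b) = ((-(a * b : ℤ) : ℤ) : ZMod N) by push_cast; ring,
    ZMod.stdAddChar_coe]
  congr 1
  push_cast
  ring

theorem dftMat_apply {N : ℕ} [NeZero N] (j k : ZMod N) : dftMat N j k = stdAddChar (-(j * k)) := by
  rw [dftMat, cexp_neg_two_pi_I_mul_mul_div, ZMod.natCast_zmod_val, ZMod.natCast_zmod_val]

theorem dftV_apply {d : ℕ} [NeZero d] (y : ZMod d → ℂ) (k : ZMod d) :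
    dftV d y k = ∑ n, y n * stdAddChar (-(n * k)) := by
  simp only [dftV, cexp_neg_two_pi_I_mul_mul_div, ZMod.natCast_zmod_val]

theorem conj_stdAddChar {N : ℕ} [NeZero N] (a : ZMod N) :
    starRingEnd ℂ (stdAddChar a) = stdAddChar (-a) := by
  rw [ZMod.stdAddChar_apply, ZMod.stdAddChar_apply, AddChar.map_neg_eq_inv, Circle.coe_inv_eq_conj]

theorem stdAddChar_mul_natCast_mul {M P N : ℕ} [NeZero M] [NeZero N] (h : M * P = N)
    (a : ZMod N) (j : ℕ) :
    stdAddChar (a * ((j * P : ℕ) : ZMod N)) =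
      stdAddChar (castHom (Dvd.intro P h) (ZMod M) a * (j : ZMod M)) := by
  have hP : (P : ℂ) ≠ 0 := Nat.cast_ne_zero.2 (right_ne_zero_of_mul (h ▸ NeZero.ne N))
  rw [← ZMod.natCast_zmod_val a, map_natCast, ← Nat.cast_mul, ← Nat.cast_mul,
    ← Int.cast_natCast, ← Int.cast_natCast (a.val * j), ZMod.stdAddChar_coe, ZMod.stdAddChar_coe]
  congr 1
  rw [show (N : ℂ) = M * P by exact_mod_cast h.symm]
  push_cast
  field_simp

theorem sum_ite_castHom_eq {β : Type*} [AddCommMonoid β] {M d : ℕ} [NeZero d] (h : M ∣ d)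
    (F : ZMod d → β) (c : ZMod d) :
    ∑ p, (if castHom h (ZMod M) p = castHom h (ZMod M) c then F p else 0) =
      ∑ r ∈ range (d / M), F (c - ((r * M : ℕ) : ZMod d)) := by
  have hM : 0 < M := Nat.pos_of_dvd_of_pos h (Nat.pos_of_neZero d)
  have hval : ∀ r ∈ range (d / M), ((r * M : ℕ) : ZMod d).val = r * M := fun r hr =>
    ZMod.val_cast_of_lt <|
      (Nat.mul_lt_mul_of_pos_right (mem_range.1 hr) hM).trans_le (Nat.div_mul_le_self d M)
  have hdvd : ∀ p, castHom h (ZMod M) p = castHom h (ZMod M) c ↔ M ∣ (c - p).val := fun p => by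
    rw [← ZMod.natCast_eq_zero_iff, ZMod.natCast_val, ← ZMod.castHom_apply (h := h), map_sub,
      sub_eq_zero, eq_comm]
  simp_rw [hdvd, ← sum_filter]
  symm
  refine sum_nbij' (fun r => c - ((r * M : ℕ) : ZMod d)) (fun p => (c - p).val / M)
    (fun r hr => ?_) (fun p hp => ?_) (fun r hr => ?_) (fun p hp => ?_) (fun _ _ => rfl)
  · rw [mem_filter_univ, sub_sub_cancel, hval r hr]
    exact dvd_mul_left M r
  · exact mem_range.2 (Nat.div_lt_div_of_lt_of_dvd h (ZMod.val_lt _))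
  · simp only [sub_sub_cancel, hval r hr, Nat.mul_div_cancel _ hM]
  · rw [mem_filter_univ] at hp
    simp only [Nat.div_mul_cancel hp, ZMod.natCast_zmod_val, sub_sub_cancel]

theorem sum_range_eq_sum_zmod_val {β : Type*} [AddCommMonoid β] {N : ℕ} [NeZero N] (f : ℕ → β) :
    ∑ j ∈ range N, f j = ∑ j : ZMod N, f j.val := by
  refine sum_nbij' (fun j => (j : ZMod N)) (fun j => j.val) (fun _ _ => mem_univ _)
    (fun j _ => mem_range.2 (ZMod.val_lt j)) (fun j hj => ZMod.val_cast_of_lt (mem_range.1 hj))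
    (fun j _ => ZMod.natCast_zmod_val j) (fun j hj => ?_)
  rw [ZMod.val_cast_of_lt (mem_range.1 hj)]

theorem sum_stdAddChar_mul {M : ℕ} [NeZero M] (y : ZMod M) :
    ∑ k : ZMod M, stdAddChar (k * y) = if y = 0 then (M : ℂ) else 0 := by
  rw [AddChar.sum_mulShift y (ZMod.isPrimitive_stdAddChar M), ZMod.card]
  split_ifs <;> simp

theorem dftMat_mul_mul_dftMat_transpose_apply {K L : ℕ} [NeZero K] [NeZero L]
    (Y : Matrix (ZMod K) (ZMod L) ℂ) (α : ZMod L) (ω : ZMod K) :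
    (dftMat L * Y.transpose * (dftMat K).transpose) α ω =
      ∑ ℓ, stdAddChar (-(α * ℓ)) * ∑ k, Y k ℓ * stdAddChar (-(ω * k)) := by
  simp only [Matrix.mul_apply, Matrix.transpose_apply, dftMat_apply, sum_mul, mul_sum]
  rw [sum_comm]
  exact sum_congr rfl fun _ _ => sum_congr rfl fun _ _ => by ring

theorem sum_norm_sq_mul_stdAddChar {K d : ℕ} [NeZero K] [NeZero d] (hK : K ∣ d)
    (a : ZMod d → ℂ) (ω : ZMod K) :
    ∑ k : ZMod K, (‖∑ n, a n * stdAddChar (-(n * ((k.val * (d / K) : ℕ) : ZMod d)))‖ : ℂ) ^ 2 *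
        stdAddChar (-(ω * k)) =
      K * ∑ r ∈ range (d / K), ∑ n,
        a n * starRingEnd ℂ (a (n + (((ω.val : ℤ) - r * K : ℤ) : ZMod d))) := by
  set ψ := castHom hK (ZMod K)
  have hphase : ∀ (n p : ZMod d) (k : ZMod K),
      stdAddChar (-(n * ((k.val * (d / K) : ℕ) : ZMod d))) *
        starRingEnd ℂ (stdAddChar (-(p * ((k.val * (d / K) : ℕ) : ZMod d)))) *
        stdAddChar (-(ω * k)) =
      stdAddChar (k * ψ (p - (n + (ω.val : ZMod d)))) := by
    intro n p k
    simp only [conj_stdAddChar, ← neg_mul, stdAddChar_mul_natCast_mul (Nat.mul_div_cancel' hK),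
      ZMod.natCast_zmod_val, ← AddChar.map_add_eq_mul]
    congr 1
    simp only [ψ, map_sub, map_add, map_neg, map_natCast, ZMod.natCast_zmod_val]
    ring
  calc _ = ∑ n, a n * ∑ p, (∑ k, stdAddChar (k * ψ (p - (n + (ω.val : ZMod d))))) *
          starRingEnd ℂ (a p) := by
        simp_rw [← Complex.mul_conj', map_sum, map_mul, sum_mul_sum, sum_mul, mul_sum]
        rw [sum_comm]
        refine sum_congr rfl fun n _ => ?_
        rw [sum_comm]
        refine sum_congr rfl fun p _ => sum_congr rfl fun k _ => ?_
        rw [← hphase]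
        ring
    _ = _ := by
        simp_rw [sum_stdAddChar_mul, map_sub, sub_eq_zero, ite_mul, zero_mul, ψ,
          sum_ite_castHom_eq hK, mul_sum]
        rw [sum_comm]
        refine sum_congr rfl fun r _ => sum_congr rfl fun n _ => ?_
        rw [show n + (((ω.val : ℤ) - r * K : ℤ) : ZMod d) = n + ω.val - ((r * K : ℕ) : ZMod d) by
          push_cast; ring]
        ring

theorem sum_range_dftV_mul_dftV {L d : ℕ} [NeZero L] [NeZero d] (hL : L ∣ d)
    (X Y : ZMod d → ℂ) (α : ZMod L) :
    ∑ ℓ ∈ range (d / L), dftV d X (((α.val : ℤ) - ℓ * L : ℤ) : ZMod d) *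
        dftV d Y (((ℓ : ℤ) * L - α.val : ℤ) : ZMod d) =
      (d / L : ℕ) * ∑ j : ZMod L, stdAddChar (-(α * j)) *
        ∑ n, X n * Y (n - ((j.val * (d / L) : ℕ) : ZMod d)) := by
  have hLd : d / L * L = d := Nat.div_mul_cancel hL
  have hdL : L * (d / L) = d := Nat.mul_div_cancel' hL
  have : NeZero (d / L) := ⟨fun h => NeZero.ne d (by rw [← hLd, h, zero_mul])⟩
  set ψ := castHom (Dvd.intro L hLd) (ZMod (d / L))
  have hphase : ∀ (n p : ZMod d) (ℓ : ℕ),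
      stdAddChar (-(n * (((α.val : ℤ) - ℓ * L : ℤ) : ZMod d))) *
        stdAddChar (-(p * (((ℓ : ℤ) * L - α.val : ℤ) : ZMod d))) =
      stdAddChar (-((n - p) * (α.val : ZMod d))) * stdAddChar ((ℓ : ZMod (d / L)) * ψ (n - p)) := by
    intro n p ℓ
    rw [mul_comm _ (ψ _), ← stdAddChar_mul_natCast_mul hLd, ← AddChar.map_add_eq_mul,
      ← AddChar.map_add_eq_mul]
    congr 1
    push_cast
    ring
  have hphase' : ∀ (n : ZMod d) (j : ℕ),
      stdAddChar (-((n - (n - ((j * (d / L) : ℕ) : ZMod d))) * (α.val : ZMod d))) =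
        stdAddChar (-(α * (j : ZMod L))) := by
    intro n j
    rw [sub_sub_cancel, ← mul_neg, mul_comm, stdAddChar_mul_natCast_mul hdL]
    simp only [map_neg, map_natCast, ZMod.natCast_zmod_val, neg_mul]
  calc _ = ∑ n, ∑ p, X n * Y p * stdAddChar (-((n - p) * (α.val : ZMod d))) *
          ∑ j : ZMod (d / L), stdAddChar (j * ψ (n - p)) := by
        simp_rw [dftV_apply, sum_mul_sum, sum_range_eq_sum_zmod_val (N := d / L), mul_sum]
        rw [sum_comm]
        refine sum_congr rfl fun n _ => ?_
        rw [sum_comm]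
        refine sum_congr rfl fun p _ => sum_congr rfl fun j _ => ?_
        have := hphase n p j.val
        rw [ZMod.natCast_zmod_val] at this
        linear_combination (X n * Y p) * this
    _ = _ := by
        have hcond : ∀ n p : ZMod d, ψ (n - p) = 0 ↔ ψ p = ψ n := fun n p => by
          rw [map_sub, sub_eq_zero, eq_comm]
        simp_rw [sum_stdAddChar_mul, hcond, mul_ite, mul_zero, ψ,
          sum_ite_castHom_eq (Dvd.intro L hLd), Nat.div_div_self hL (NeZero.ne d)]
        simp_rw [hphase', sum_range_eq_sum_zmod_val (N := L), ZMod.natCast_zmod_val, mul_sum]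
        rw [sum_comm]
        exact sum_congr rfl fun j _ => sum_congr rfl fun n _ => by ring

/-- aliased Wigner distribution deconvolution, noiseless. -/
theorem wdd_aliased (d K L : ℕ) [NeZero d] [NeZero K] [NeZero L]
    (hK : K ∣ d) (hL : L ∣ d) (x m : ZMod d → ℂ)
    (Y : Matrix (ZMod K) (ZMod L) ℂ)
    (hY : ∀ (k : ZMod K) (ℓ : ZMod L), Y k ℓ =
      ((‖(∑ n : ZMod d, x n * m (n - ((ℓ.val * (d / L) : ℕ) : ZMod d)) *
        Complex.exp (-2 * Real.pi * Complex.I * (n.val : ℂ) *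
          ((k.val * (d / K) : ℕ) : ℂ) / (d : ℂ)))‖) ^ 2 : ℂ)) :
    ∀ (α : ZMod L) (ω : ZMod K),
      (dftMat L * Y.transpose * (dftMat K).transpose) α ω =
        ((K : ℂ) * (L : ℂ) / (d : ℂ)) *
          ∑ r ∈ Finset.range (d / K), ∑ ℓ ∈ Finset.range (d / L),
            dftV d (hadV x (shiftV (((ω.val : ℤ) - (r : ℤ) * (K : ℤ) : ℤ) : ZMod d) (conjV x)))
                (((α.val : ℤ) - (ℓ : ℤ) * (L : ℤ) : ℤ) : ZMod d) *
            dftV d (hadV m (shiftV (((ω.val : ℤ) - (r : ℤ) * (K : ℤ) : ℤ) : ZMod d) (conjV m)))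
                (((ℓ : ℤ) * (L : ℤ) - (α.val : ℤ) : ℤ) : ZMod d) := by
  intro α ω
  have hY' : ∀ k ℓ, Y k ℓ = (‖∑ n, x n * m (n - ((ℓ.val * (d / L) : ℕ) : ZMod d)) *
      stdAddChar (-(n * ((k.val * (d / K) : ℕ) : ZMod d)))‖ : ℂ) ^ 2 := fun k ℓ => by
    simp only [hY, cexp_neg_two_pi_I_mul_mul_div, ZMod.natCast_zmod_val]
  have hconst : (K : ℂ) * L / d * (d / L : ℕ) = K := by
    have hd : (d : ℂ) ≠ 0 := Nat.cast_ne_zero.2 (NeZero.ne d)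
    have hL0 : (L : ℂ) ≠ 0 := Nat.cast_ne_zero.2 (NeZero.ne L)
    rw [Nat.cast_div hL hL0]
    field_simp
  rw [dftMat_mul_mul_dftMat_transpose_apply]
  simp_rw [hY', sum_norm_sq_mul_stdAddChar hK, sum_range_dftV_mul_dftV hL, mul_sum]
  rw [sum_comm]
  refine sum_congr rfl fun r _ => sum_congr rfl fun ℓ _ => sum_congr rfl fun n _ => ?_
  rw [← mul_assoc _ ((d / L : ℕ) : ℂ), hconst]
  simp only [hadV, shiftV, conjV, sub_add_eq_add_sub, map_mul]
  ring
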